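/- Let n ≥ 3 and let the dihedral group D_{2n} act diagonally on C[u1,v1,u2,v2], via ρ: u_i ↦ ξu_i, v_i ↦ ξ̄v_i (i = 1,2) and τ: u_i ↔ v_i (i = 1,2), with ξ = e^{2πi/n}. Then C[u1,v1,u2,v2] is a free module over the subalgebra C[u1,v1]^{D_{2n}} ⊗ C[u2,v2]^{D_{2n}} = C[u1v1, u1^n+v1^n, u2v2, u2^n+v2^n], with free basis {u1^a u2^c, u1^a v2^d, v1^b u2^c, v1^b v2^d : 0 ≤ a,c ≤ n, 1 ≤ b,d ≤ n−1}. -/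

import Mathlib

/-!
Write `s = uv`, `t = uⁿ + vⁿ`. The `ℂ[s, t]`-span of `1, u, …, uⁿ, v, …, vⁿ⁻¹` contains `1` and
is stable under multiplication by `u` (as `uⁿ⁺¹ = t u - s vⁿ⁻¹`) and by `v` (as `vⁿ = t - uⁿ`);
hence the products of the spans for the two pairs of variables exhaust `ℂ[u₁, v₁, u₂, v₂]`.

An invariant polynomial is constant on the fibres of `(u, v) ↦ (uv, uⁿ + vⁿ)`. Over the image of a
point `(α, β)` with `αβ(αⁿ - βⁿ) ≠ 0` the fibre consists of the `2n` points `(z, αβ / z)` with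
`zⁿ ∈ {αⁿ, βⁿ}`, and after multiplication by `zⁿ⁻¹` the `2n` basis elements become distinct
monomials in `z` of degree `< 2n`, so they are linearly independent as functions on the fibre.
Therefore the coefficients of a relation over the invariants vanish at every such point of `ℂ⁴`,
hence identically.
-/

open MvPolynomial

theorem LinearIndependent.mul_prod {K ι κ Y Z : Type*} [CommRing K] [Fintype ι] [Fintype κ]
    {f : ι → Y → K} {g : κ → Z → K} (hf : LinearIndependent K f) (hg : LinearIndependent K g) :
    LinearIndependent K fun p : ι × κ => fun yz : Y × Z => f p.1 yz.1 * g p.2 yz.2 := by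
  rw [Fintype.linearIndependent_iff] at hf hg ⊢
  intro c hc
  have hcg : ∀ y k, ∑ i, c (i, k) * f i y = 0 := fun y =>
    hg _ <| funext fun z => by
      simpa [Fintype.sum_prod_type_right, Finset.sum_mul, mul_assoc] using congrFun hc (y, z)
  exact fun ⟨i, k⟩ => hf (fun i => c (i, k)) (funext fun y => by simpa using hcg y k) i

theorem eq_zero_of_forall_sum_mul_pow_eq_zero {K ι : Type*} [CommRing K] [IsDomain K] [Fintype ι]
    {e : ι → ℕ} (he : e.Injective) {s : Finset K} (hs : ∀ i, e i < s.card) {c : ι → K}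
    (h : ∀ z ∈ s, ∑ i, c i * z ^ e i = 0) : c = 0 := by
  rcases isEmpty_or_nonempty ι with hι | ⟨⟨i₀⟩⟩
  · exact Subsingleton.elim _ _
  set P : Polynomial K := ∑ i, Polynomial.monomial (e i) (c i)
  have hP : P = 0 := by
    refine Polynomial.eq_zero_of_natDegree_lt_card_of_eval_eq_zero' P s (fun z hz => ?_) ?_
    · simpa [P, Polynomial.eval_finsetSum] using h z hz
    · have hdeg : P.natDegree ≤ s.card - 1 := Polynomial.natDegree_sum_le_of_forall_le _ _
        fun i _ => (Polynomial.natDegree_monomial_le _).trans (by have := hs i; omega)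
      have := hs i₀
      omega
  have hmon := (Polynomial.basisMonomials K).linearIndependent.comp e he
  funext i
  refine Fintype.linearIndependent_iff.mp hmon c ?_ i
  simpa [P, Polynomial.smul_monomial] using hP

lemma IsPrimitiveRoot.card_nthRootsFinset_pow {R : Type*} [CommRing R] [IsDomain R] {n : ℕ}
    {ζ : R} (hζ : IsPrimitiveRoot ζ n) {α : R} (hα : α ≠ 0) :
    (Polynomial.nthRootsFinset n (α ^ n)).card = n := by
  classical
  rw [Polynomial.nthRootsFinset_def, Multiset.toFinset_card_of_nodup
    (hζ.nthRoots_nodup (pow_ne_zero n hα)), hζ.card_nthRoots, if_pos ⟨α, rfl⟩]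

theorem MvPolynomial.eq_zero_of_eval_eq_zero_of_eval_ne_zero {K σ : Type*} [CommRing K]
    [IsDomain K] [Infinite K] {f g : MvPolynomial σ K} (hf : f ≠ 0)
    (h : ∀ x, eval x f ≠ 0 → eval x g = 0) : g = 0 := by
  have hgf : g * f = 0 := MvPolynomial.funext fun x => by
    by_cases hx : eval x f = 0 <;> simp [hx, h]
  exact (mul_eq_zero.mp hgf).resolve_right hf

lemma MvPolynomial.submodule_eq_top_of_X_mul_mem {R σ : Type*} [CommRing R]
    {A : Subalgebra R (MvPolynomial σ R)} (S : Submodule A (MvPolynomial σ R)) (h1 : 1 ∈ S)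
    (hX : ∀ i, ∀ p ∈ S, X i * p ∈ S) : S = ⊤ := by
  refine Submodule.eq_top_iff'.mpr fun p => ?_
  induction p using MvPolynomial.induction_on with
  | C a => simpa [smul_eq_C_mul] using S.smul_of_tower_mem a h1
  | add p q hp hq => exact add_mem hp hq
  | mul_X p i hp => rw [mul_comm]; exact hX i p hp

section Submodule

variable {R M : Type*} [CommRing R] [CommRing M] [Algebra R M] {A : Subalgebra R M}

lemma Submodule.mul_mem_of_mem_subalgebra {S : Submodule A M} {a x : M} (ha : a ∈ A)
    (hx : x ∈ S) : a * x ∈ S :=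
  S.smul_mem ⟨a, ha⟩ hx

lemma Submodule.mul_mem_span_of_forall_mul_mem {s : Set M} {u : M}
    (h : ∀ x ∈ s, u * x ∈ span A s) {y : M} (hy : y ∈ span A s) : u * y ∈ span A s :=
  (span_le (p := (span A s).comap (LinearMap.mulLeft A u))).mpr h hy

lemma Submodule.mul_mem_mul_of_forall_mul_mem {S T : Submodule A M} {u : M}
    (hu : ∀ x ∈ S, u * x ∈ S) {y : M} (hy : y ∈ S * T) : u * y ∈ S * T := by
  induction hy using Submodule.mul_induction_on' with
  | mem_mul_mem s hs t ht => rw [← mul_assoc]; exact mul_mem_mul (hu s hs) ht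
  | add y _ z _ hy hz => rw [mul_add]; exact add_mem hy hz

end Submodule

def pairBasis {M : Type*} [Monoid M] (n : ℕ) (u v : M) : Fin (n + 1) ⊕ Fin (n - 1) → M :=
  Sum.elim (fun a => u ^ (a : ℕ)) (fun b => v ^ ((b : ℕ) + 1))

@[simp]
lemma pairBasis_inl {M : Type*} [Monoid M] (n : ℕ) (u v : M) (a : Fin (n + 1)) :
    pairBasis n u v (Sum.inl a) = u ^ (a : ℕ) :=
  rfl

@[simp]
lemma pairBasis_inr {M : Type*} [Monoid M] (n : ℕ) (u v : M) (b : Fin (n - 1)) :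
    pairBasis n u v (Sum.inr b) = v ^ ((b : ℕ) + 1) :=
  rfl

lemma map_pairBasis {M N F : Type*} [Monoid M] [Monoid N] [FunLike F M N] [MonoidHomClass F M N]
    (f : F) (n : ℕ) (u v : M) (q : Fin (n + 1) ⊕ Fin (n - 1)) :
    f (pairBasis n u v q) = pairBasis n (f u) (f v) q := by
  cases q <;> simp

section Spanning

open Submodule

variable {R M : Type*} [CommRing R] [CommRing M] [Algebra R M] {A : Subalgebra R M} {n : ℕ}
  {u v : M}

lemma pow_mem_span_pairBasis_left {a : ℕ} (ha : a ≤ n) :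
    u ^ a ∈ span A (Set.range (pairBasis n u v)) :=
  subset_span ⟨Sum.inl ⟨a, by omega⟩, rfl⟩

lemma one_mem_span_pairBasis : (1 : M) ∈ span A (Set.range (pairBasis n u v)) := by
  simpa using pow_mem_span_pairBasis_left (A := A) (u := u) (v := v) n.zero_le

lemma pow_mem_span_pairBasis_right {b : ℕ} (hb : b < n) :
    v ^ b ∈ span A (Set.range (pairBasis n u v)) := by
  rcases b with _ | b
  · simpa using one_mem_span_pairBasis
  · exact subset_span ⟨Sum.inr ⟨b, by omega⟩, rfl⟩

variable (hP : u * v ∈ A) (hQ : u ^ n + v ^ n ∈ A)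
include hP hQ

lemma mul_mem_span_pairBasis_left (hn : 1 ≤ n) {x : M}
    (hx : x ∈ span A (Set.range (pairBasis n u v))) :
    u * x ∈ span A (Set.range (pairBasis n u v)) := by
  refine mul_mem_span_of_forall_mul_mem ?_ hx
  rintro _ ⟨a | b, rfl⟩
  · rcases Nat.lt_or_eq_of_le (Nat.lt_succ_iff.mp a.2) with ha | ha
    · rw [pairBasis_inl, ← pow_succ']
      exact pow_mem_span_pairBasis_left ha
    · have h : u * pairBasis n u v (Sum.inl a) =
          (u ^ n + v ^ n) * u ^ 1 - u * v * v ^ (n - 1) := by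
        obtain ⟨m, rfl⟩ := Nat.exists_eq_add_of_le' hn
        rw [pairBasis_inl, ha, Nat.add_sub_cancel]
        ring
      rw [h]
      exact sub_mem (mul_mem_of_mem_subalgebra hQ (pow_mem_span_pairBasis_left hn))
        (mul_mem_of_mem_subalgebra hP (pow_mem_span_pairBasis_right (by omega)))
  · rw [pairBasis_inr, pow_succ', ← mul_assoc]
    exact mul_mem_of_mem_subalgebra hP (pow_mem_span_pairBasis_right (by omega))

lemma mul_mem_span_pairBasis_right (hn : 2 ≤ n) {x : M}
    (hx : x ∈ span A (Set.range (pairBasis n u v))) :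
    v * x ∈ span A (Set.range (pairBasis n u v)) := by
  refine mul_mem_span_of_forall_mul_mem ?_ hx
  rintro _ ⟨⟨_ | a, ha⟩ | b, rfl⟩
  · simpa using pow_mem_span_pairBasis_right (A := A) (u := u) (v := v) (b := 1) hn
  · rw [pairBasis_inl, pow_succ', mul_left_comm, ← mul_assoc]
    exact mul_mem_of_mem_subalgebra hP (pow_mem_span_pairBasis_left (by omega))
  · rw [pairBasis_inr, ← pow_succ']
    rcases Nat.lt_or_eq_of_le (show (b : ℕ) + 2 ≤ n by omega) with hb | hb
    · exact pow_mem_span_pairBasis_right hb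
    · rw [hb, show v ^ n = (u ^ n + v ^ n) * 1 - u ^ n by ring]
      exact sub_mem (mul_mem_of_mem_subalgebra hQ one_mem_span_pairBasis)
        (pow_mem_span_pairBasis_left le_rfl)

end Spanning

section Fibre

variable {K : Type*} [Field K] {n : ℕ} {α β z : K}

lemma ne_zero_of_pow_eq_or_pow_eq (hn : n ≠ 0) (hα : α ≠ 0) (hβ : β ≠ 0)
    (hz : z ^ n = α ^ n ∨ z ^ n = β ^ n) : z ≠ 0 := by
  rcases hz with h | h
  exacts [ne_zero_pow hn (h ▸ pow_ne_zero n hα), ne_zero_pow hn (h ▸ pow_ne_zero n hβ)]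

lemma pow_add_div_pow_eq (hα : α ≠ 0) (hβ : β ≠ 0) (hz : z ^ n = α ^ n ∨ z ^ n = β ^ n) :
    z ^ n + (α * β / z) ^ n = α ^ n + β ^ n := by
  rw [div_pow, mul_pow]
  rcases hz with h | h <;> rw [h]
  · rw [mul_div_cancel_left₀ _ (pow_ne_zero n hα)]
  · rw [mul_div_cancel_right₀ _ (pow_ne_zero n hβ), add_comm]

lemma IsPrimitiveRoot.card_nthRootsFinset_pow_union [DecidableEq K] {ζ : K}
    (hζ : IsPrimitiveRoot ζ n) (hα : α ≠ 0) (hβ : β ≠ 0) (hαβ : α ^ n ≠ β ^ n) :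
    (Polynomial.nthRootsFinset n (α ^ n) ∪ Polynomial.nthRootsFinset n (β ^ n)).card = 2 * n := by
  have hn : 0 < n := Nat.pos_of_ne_zero fun h => hαβ (by simp [h])
  rw [Finset.card_union_of_disjoint, hζ.card_nthRootsFinset_pow hα,
    hζ.card_nthRootsFinset_pow hβ, two_mul]
  refine Finset.disjoint_left.mpr fun z hzα hzβ => hαβ ?_
  simp only [Polynomial.mem_nthRootsFinset hn] at hzα hzβ
  rw [← hzα, hzβ]

lemma pow_sub_one_mul_pairBasis_div (hz : z ≠ 0) {c : K} (q : Fin (n + 1) ⊕ Fin (n - 1)) :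
    z ^ (n - 1) * pairBasis n z (c / z) q =
      Sum.elim (fun _ : Fin (n + 1) => 1) (fun b : Fin (n - 1) => c ^ ((b : ℕ) + 1)) q *
        z ^ Sum.elim (fun a : Fin (n + 1) => n - 1 + (a : ℕ))
          (fun b : Fin (n - 1) => n - 2 - (b : ℕ)) q := by
  rcases q with a | b
  · simp [pow_add]
  · have hb : z ^ (n - 1) = z ^ (n - 2 - b) * z ^ ((b : ℕ) + 1) := by
      rw [← pow_add]; congr 1; omega
    simp only [pairBasis_inr, Sum.elim_inr, div_pow, hb]
    field_simp

theorem linearIndependent_pairBasis_fibre {ζ : K} (hζ : IsPrimitiveRoot ζ n) (hα : α ≠ 0)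
    (hβ : β ≠ 0) (hαβ : α ^ n ≠ β ^ n) :
    LinearIndependent K fun q (z : {z : K // z ^ n = α ^ n ∨ z ^ n = β ^ n}) =>
      pairBasis n (z : K) (α * β / z) q := by
  classical
  have hn : n ≠ 0 := fun h => hαβ (by simp [h])
  set e : Fin (n + 1) ⊕ Fin (n - 1) → ℕ := Sum.elim (fun a => n - 1 + a) (fun b => n - 2 - b)
  set w : Fin (n + 1) ⊕ Fin (n - 1) → K := Sum.elim (fun _ => 1) (fun b => (α * β) ^ ((b : ℕ) + 1))
  have he : e.Injective := by
    rintro (a | b) (a' | b') h <;> simp only [e, Sum.elim_inl, Sum.elim_inr] at h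
    · exact congrArg _ (Fin.ext (by omega))
    · omega
    · omega
    · exact congrArg _ (Fin.ext (by omega))
  have hw : ∀ q, w q ≠ 0 := by
    rintro (a | b) <;> simp [w, hα, hβ]
  set s := Polynomial.nthRootsFinset n (α ^ n) ∪ Polynomial.nthRootsFinset n (β ^ n)
  have hmem : ∀ z ∈ s, z ^ n = α ^ n ∨ z ^ n = β ^ n := by
    simp [s, Polynomial.mem_nthRootsFinset (Nat.pos_of_ne_zero hn)]
  have hs : s.card = 2 * n := hζ.card_nthRootsFinset_pow_union hα hβ hαβ
  rw [Fintype.linearIndependent_iff]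
  intro d hd q
  have hdw : (fun q => d q * w q) = 0 := by
    refine eq_zero_of_forall_sum_mul_pow_eq_zero he (s := s) ?_ fun z hz => ?_
    · rintro (a | b) <;> simp only [e, hs, Sum.elim_inl, Sum.elim_inr] <;> omega
    · have hz0 := ne_zero_of_pow_eq_or_pow_eq hn hα hβ (hmem z hz)
      calc ∑ q, d q * w q * z ^ e q = z ^ (n - 1) * ∑ q, d q * pairBasis n z (α * β / z) q := by
            simp only [Finset.mul_sum, mul_left_comm _ (d _), pow_sub_one_mul_pairBasis_div hz0,
              mul_assoc, e, w]
        _ = 0 := mul_eq_zero_of_right _ <| by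
            simpa only [Finset.sum_apply, Pi.smul_apply, smul_eq_mul, Pi.zero_apply] using
              congrFun hd ⟨z, hmem z hz⟩
  exact (mul_eq_zero.mp (congrFun hdw q)).resolve_right (hw q)

end Fibre

/-- `R[u₁, v₁]^{D_{2n}} ⊗ R[u₂, v₂]^{D_{2n}}`, with `(u₁, v₁, u₂, v₂) = (X 0, X 1, X 2, X 3)`. -/
noncomputable def diagonalInvariants (R : Type*) [CommRing R] (n : ℕ) :
    Subalgebra R (MvPolynomial (Fin 4) R) :=
  Algebra.adjoin R {X 0 * X 1, X 0 ^ n + X 1 ^ n, X 2 * X 3, X 2 ^ n + X 3 ^ n}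

theorem span_pairBasis_mul_eq_top (R : Type*) [CommRing R] {n : ℕ} (hn : 2 ≤ n) :
    Submodule.span (diagonalInvariants R n)
      (Set.range fun p : (Fin (n + 1) ⊕ Fin (n - 1)) × (Fin (n + 1) ⊕ Fin (n - 1)) =>
        pairBasis n (X 0 : MvPolynomial (Fin 4) R) (X 1) p.1 * pairBasis n (X 2) (X 3) p.2) =
      ⊤ := by
  have mem : ∀ p ∈ ({X 0 * X 1, X 0 ^ n + X 1 ^ n, X 2 * X 3, X 2 ^ n + X 3 ^ n} :
      Set (MvPolynomial (Fin 4) R)), p ∈ diagonalInvariants R n := fun _ hp =>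
    Algebra.subset_adjoin hp
  rw [← Set.image2_range, Set.image2_mul, ← Submodule.span_mul_span]
  refine MvPolynomial.submodule_eq_top_of_X_mul_mem _ ?_ fun i p hp => ?_
  · simpa using Submodule.mul_mem_mul (one_mem_span_pairBasis (A := diagonalInvariants R n))
      (one_mem_span_pairBasis (A := diagonalInvariants R n))
  fin_cases i
  · exact Submodule.mul_mem_mul_of_forall_mul_mem
      (fun _ => mul_mem_span_pairBasis_left (mem _ (by simp)) (mem _ (by simp)) (by omega)) hp
  · exact Submodule.mul_mem_mul_of_forall_mul_mem
      (fun _ => mul_mem_span_pairBasis_right (mem _ (by simp)) (mem _ (by simp)) hn) hp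
  · rw [Submodule.mul_comm] at hp ⊢
    exact Submodule.mul_mem_mul_of_forall_mul_mem
      (fun _ => mul_mem_span_pairBasis_left (mem _ (by simp)) (mem _ (by simp)) (by omega)) hp
  · rw [Submodule.mul_comm] at hp ⊢
    exact Submodule.mul_mem_mul_of_forall_mul_mem
      (fun _ => mul_mem_span_pairBasis_right (mem _ (by simp)) (mem _ (by simp)) hn) hp

lemma eval_eq_of_mem_diagonalInvariants {R : Type*} [CommRing R] {n : ℕ} {x y : Fin 4 → R}
    (h₁ : y 0 * y 1 = x 0 * x 1) (h₂ : y 0 ^ n + y 1 ^ n = x 0 ^ n + x 1 ^ n)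
    (h₃ : y 2 * y 3 = x 2 * x 3) (h₄ : y 2 ^ n + y 3 ^ n = x 2 ^ n + x 3 ^ n)
    {p : MvPolynomial (Fin 4) R} (hp : p ∈ diagonalInvariants R n) : eval y p = eval x p := by
  have : Set.EqOn (aeval y) (aeval x) (diagonalInvariants R n : Set (MvPolynomial (Fin 4) R)) :=
    AlgHom.eqOn_adjoin_iff.mpr (by rintro _ (rfl | rfl | rfl | rfl) <;> simp [h₁, h₂, h₃, h₄])
  simpa using this hp

theorem linearIndependent_pairBasis_mul {n : ℕ} (hn : n ≠ 0) :
    LinearIndependent (diagonalInvariants ℂ n)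
      fun p : (Fin (n + 1) ⊕ Fin (n - 1)) × (Fin (n + 1) ⊕ Fin (n - 1)) =>
        pairBasis n (X 0 : MvPolynomial (Fin 4) ℂ) (X 1) p.1 * pairBasis n (X 2) (X 3) p.2 := by
  obtain ⟨ζ, hζ⟩ : ∃ ζ : ℂ, IsPrimitiveRoot ζ n := ⟨_, Complex.isPrimitiveRoot_exp n hn⟩
  rw [Fintype.linearIndependent_iff]
  intro g hg p
  set D : MvPolynomial (Fin 4) ℂ :=
    X 0 * X 1 * X 2 * X 3 * (X 0 ^ n - X 1 ^ n) * (X 2 ^ n - X 3 ^ n)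
  have hD : D ≠ 0 := by
    intro h
    have h0 : (1 : ℂ) - 2 ^ n = 0 := by simpa [D] using congrArg (eval ![1, 2, 1, 2]) h
    have h2 : (2 : ℕ) ^ n = 1 := by exact_mod_cast (sub_eq_zero.mp h0).symm
    exact hn (by simpa using h2)
  refine Subtype.ext (eq_zero_of_eval_eq_zero_of_eval_ne_zero hD fun x hx => ?_)
  simp only [D, map_mul, map_sub, map_pow, eval_X, mul_ne_zero_iff, sub_ne_zero] at hx
  obtain ⟨⟨⟨⟨⟨hx₀, hx₁⟩, hx₂⟩, hx₃⟩, hx₀₁⟩, hx₂₃⟩ := hx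
  have hfibre := (linearIndependent_pairBasis_fibre hζ hx₀ hx₁ hx₀₁).mul_prod
    (linearIndependent_pairBasis_fibre hζ hx₂ hx₃ hx₂₃)
  refine Fintype.linearIndependent_iff.mp hfibre (fun p => eval x (g p)) (funext fun ⟨z, w⟩ => ?_) p
  set y : Fin 4 → ℂ := ![z, x 0 * x 1 / z, w, x 2 * x 3 / w]
  have hz := ne_zero_of_pow_eq_or_pow_eq hn hx₀ hx₁ z.2
  have hw := ne_zero_of_pow_eq_or_pow_eq hn hx₂ hx₃ w.2
  have hinv : ∀ p, eval y (g p) = eval x (g p) := fun p =>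
    eval_eq_of_mem_diagonalInvariants (mul_div_cancel₀ _ hz) (pow_add_div_pow_eq hx₀ hx₁ z.2)
      (mul_div_cancel₀ _ hw) (pow_add_div_pow_eq hx₂ hx₃ w.2) (g p).2
  simpa [y, hinv, map_pairBasis, Subalgebra.smul_def] using congrArg (eval y) hg

theorem four_variable_free_over_invariants (n : ℕ) (hn : 3 ≤ n) :
    ∃ B : Module.Basis ((Fin (n + 1) ⊕ Fin (n - 1)) × (Fin (n + 1) ⊕ Fin (n - 1)))
        ↥(Algebra.adjoin ℂ
            ({X 0 * X 1, X 0 ^ n + X 1 ^ n, X 2 * X 3, X 2 ^ n + X 3 ^ n} :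
              Set (MvPolynomial (Fin 4) ℂ)))
        (MvPolynomial (Fin 4) ℂ),
      ∀ p : (Fin (n + 1) ⊕ Fin (n - 1)) × (Fin (n + 1) ⊕ Fin (n - 1)),
        B p =
          (Sum.elim
              (fun i : Fin (n + 1) => (X 0 : MvPolynomial (Fin 4) ℂ) ^ (i : ℕ))
              (fun j : Fin (n - 1) =>
                (X 1 : MvPolynomial (Fin 4) ℂ) ^ ((j : ℕ) + 1)) p.1) *
          (Sum.elim
              (fun i : Fin (n + 1) => (X 2 : MvPolynomial (Fin 4) ℂ) ^ (i : ℕ))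
              (fun j : Fin (n - 1) =>
                (X 3 : MvPolynomial (Fin 4) ℂ) ^ ((j : ℕ) + 1)) p.2) := by
  have hli := linearIndependent_pairBasis_mul (n := n) (by omega)
  have hsp := span_pairBasis_mul_eq_top ℂ (n := n) (by omega)
  exact ⟨.mk hli hsp.ge, Module.Basis.mk_apply hli hsp.ge⟩
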